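/- arXiv:1910.04229 — 2 statements merged into one kernel-verified Lean document; each statement's English description precedes it below -/
import Mathlib

section
/- Best sublinear residual bound (Remark 1, first bound): Let d ≥ 1, let f, g : ℝ^d → ℝ be convex, and let h : ℝ^d → ℝ be convex and differentiable with L_h-Lipschitz gradient, L_h > 0. Set λ = 1/2 and α = (2 − λ)/L_h = 3/(2L_h). Then along any TOS trajectory with stepsize α and relaxation λ that admits a TOS fixed point (z*, x*, y*, p_g*, p_f*), one has for every k ≥ 1: min over 0 ≤ i < k of ‖p_f^i + p_g^i + ∇h(x_B^i)‖² ≤ 32 L_h² ‖z⁰ − z*‖² / (27 k). -/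
open scoped RealInnerProductSpace

/-!
Write `r = p_f + p_g + ∇h(x_B)` for the residual; it vanishes at the fixed point. Subtracting the
fixed-point relations from one TOS step, `z⁺ - z* = (z - z*) - λα r`, while monotonicity of the
subgradients of `f` and `g` and the cocoercivity `‖∇h x - ∇h y‖² ≤ L ⟪∇h x - ∇h y, x - y⟫`
(Baillon–Haddad) give `⟪z - z*, r⟫ ≥ α (1 - αL/4) ‖r‖²`. Hence
`‖z⁺ - z*‖² + λα²(2 - λ - αL/2) ‖r‖² ≤ ‖z - z*‖²`, with constant `27 / (32 L²)` for `λ = 1/2`,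
`α = 3/(2L)`. Summing `k` steps, the squared residuals add up to at most `‖z⁰ - z*‖²`, and the
smallest of them is at most their average.
-/

open Set AffineMap

section Gradient

variable {E : Type*} [NormedAddCommGroup E] [InnerProductSpace ℝ E] [CompleteSpace E]
  {h : E → ℝ} {x y : E}

theorem HasGradientAt.hasDerivAt_comp_lineMap {g : E} {t : ℝ}
    (hg : HasGradientAt h g (lineMap x y t)) :
    HasDerivAt (h ∘ lineMap x y) ⟪g, y - x⟫ t := by
  simpa using (hasGradientAt_iff_hasFDerivAt.mp hg).comp_hasDerivAt t hasDerivAt_lineMap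

theorem ConvexOn.add_inner_le_of_hasGradientAt {g : E} (hh : ConvexOn ℝ univ h)
    (hg : HasGradientAt h g x) (y : E) : h x + ⟪g, y - x⟫ ≤ h y := by
  have hconv : ConvexOn ℝ univ (h ∘ lineMap (k := ℝ) x y) := by
    simpa using hh.comp_affineMap (lineMap x y : ℝ →ᵃ[ℝ] E)
  have hderiv : HasDerivAt (h ∘ lineMap (k := ℝ) x y) ⟪g, y - x⟫ 0 :=
    HasGradientAt.hasDerivAt_comp_lineMap (by simpa using hg)
  have := hconv.le_slope_of_hasDerivAt (mem_univ 0) (mem_univ 1) zero_lt_one hderiv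
  simp only [slope_def_field, Function.comp_apply, lineMap_apply_one, lineMap_apply_zero,
    sub_zero, div_one] at this
  linarith

theorem le_add_inner_add_of_lipschitz_gradient {gradh : E → E} {L : ℝ}
    (hdiff : ∀ x, HasGradientAt h (gradh x) x)
    (hlip : ∀ x y, ‖gradh x - gradh y‖ ≤ L * ‖x - y‖) (x y : E) :
    h y ≤ h x + ⟪gradh x, y - x⟫ + L / 2 * ‖y - x‖ ^ 2 := by
  set ψ : ℝ → ℝ := fun t ↦
    h (lineMap x y t) - t * ⟪gradh x, y - x⟫ - L / 2 * ‖y - x‖ ^ 2 * t ^ 2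
  have hderiv : ∀ t, HasDerivAt ψ
      (⟪gradh (lineMap x y t) - gradh x, y - x⟫ - L * ‖y - x‖ ^ 2 * t) t := by
    intro t
    refine ((((hdiff _).hasDerivAt_comp_lineMap).sub
      ((hasDerivAt_id t).mul_const _)).sub ((hasDerivAt_pow 2 t).const_mul _)).congr_deriv ?_
    rw [inner_sub_left]
    push_cast
    ring
  have hanti : AntitoneOn ψ (Icc 0 1) := by
    refine antitoneOn_of_hasDerivWithinAt_nonpos (convex_Icc 0 1)
      (HasDerivAt.continuousOn fun t _ ↦ hderiv t) (fun t _ ↦ (hderiv t).hasDerivWithinAt) ?_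
    intro t ht
    rw [interior_Icc] at ht
    have hdist : ‖lineMap x y t - x‖ = t * ‖y - x‖ := by
      rw [lineMap_apply_module', add_sub_cancel_right, norm_smul, Real.norm_of_nonneg ht.1.le]
    refine sub_nonpos.mpr ?_
    calc ⟪gradh (lineMap x y t) - gradh x, y - x⟫
        ≤ ‖gradh (lineMap x y t) - gradh x‖ * ‖y - x‖ := real_inner_le_norm _ _
      _ ≤ L * (t * ‖y - x‖) * ‖y - x‖ := by
          gcongr
          exact hdist ▸ hlip _ _
      _ = L * ‖y - x‖ ^ 2 * t := by ring
  have hψ0 : ψ 0 = h x := by simp [ψ]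
  have hψ1 : ψ 1 = h y - ⟪gradh x, y - x⟫ - L / 2 * ‖y - x‖ ^ 2 := by simp [ψ]
  linarith [hanti (left_mem_Icc.mpr zero_le_one) (right_mem_Icc.mpr zero_le_one) zero_le_one]

theorem ConvexOn.add_inner_add_sq_le_of_lipschitz_gradient {gradh : E → E} {L : ℝ}
    (hh : ConvexOn ℝ univ h) (hdiff : ∀ x, HasGradientAt h (gradh x) x)
    (hlip : ∀ x y, ‖gradh x - gradh y‖ ≤ L * ‖x - y‖) (hL : 0 < L) (x y : E) :
    h x + ⟪gradh x, y - x⟫ + ‖gradh y - gradh x‖ ^ 2 / (2 * L) ≤ h y := by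
  set D := gradh y - gradh x
  -- `y - D / L` is a gradient step from `y` for `h - ⟪gradh x, ·⟫`, which is minimal at `x`.
  have hlow := hh.add_inner_le_of_hasGradientAt (hdiff x) (y - L⁻¹ • D)
  have hup := le_add_inner_add_of_lipschitz_gradient hdiff hlip y (y - L⁻¹ • D)
  have hD : ⟪gradh y, D⟫ - ⟪gradh x, D⟫ = ‖D‖ ^ 2 := by
    rw [← inner_sub_left, real_inner_self_eq_norm_sq]
  rw [sub_right_comm, inner_sub_right, real_inner_smul_right] at hlow
  rw [sub_sub_cancel_left, inner_neg_right, real_inner_smul_right, norm_neg, norm_smul,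
    Real.norm_of_nonneg (inv_nonneg.mpr hL.le)] at hup
  field_simp at hup hlow ⊢
  linarith

theorem ConvexOn.sq_norm_sub_le_mul_inner_of_lipschitz_gradient {gradh : E → E} {L : ℝ}
    (hh : ConvexOn ℝ univ h) (hdiff : ∀ x, HasGradientAt h (gradh x) x)
    (hlip : ∀ x y, ‖gradh x - gradh y‖ ≤ L * ‖x - y‖) (hL : 0 < L) (x y : E) :
    ‖gradh x - gradh y‖ ^ 2 ≤ L * ⟪gradh x - gradh y, x - y⟫ := by
  have hxy := hh.add_inner_add_sq_le_of_lipschitz_gradient hdiff hlip hL x y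
  have hyx := hh.add_inner_add_sq_le_of_lipschitz_gradient hdiff hlip hL y x
  rw [norm_sub_rev] at hxy
  rw [← neg_sub x y, inner_neg_right] at hxy
  rw [inner_sub_left]
  field_simp at hxy hyx
  linarith

end Gradient

section ThreeOperatorSplitting

variable {E : Type*} [NormedAddCommGroup E] [InnerProductSpace ℝ E]

theorem inner_sub_nonneg_of_subgradient {φ : E → ℝ} {x y p q : E}
    (hp : ∀ w, φ x + ⟪p, w - x⟫ ≤ φ w) (hq : ∀ w, φ y + ⟪q, w - y⟫ ≤ φ w) :
    0 ≤ ⟪p - q, x - y⟫ := by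
  have hpy := hp y
  have hqx := hq x
  rw [← neg_sub x y, inner_neg_right] at hpy
  rw [inner_sub_left]
  linarith

theorem mul_sq_norm_add_le_inner {α L : ℝ} {ζ u v w : E} (hL : 0 < L)
    (hu : 0 ≤ ⟪u, ζ - α • u⟫) (hv : 0 ≤ ⟪v, ζ - α • u - α • (u + v + w)⟫)
    (hw : ‖w‖ ^ 2 ≤ L * ⟪w, ζ - α • u⟫) :
    α * (1 - α * L / 4) * ‖u + v + w‖ ^ 2 ≤ ⟪ζ, u + v + w⟫ := by
  have hsq : 0 ≤ ‖w - (α * L / 2) • (u + v + w)‖ ^ 2 := sq_nonneg _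
  simp only [← real_inner_self_eq_norm_sq, inner_sub_left, inner_sub_right, inner_add_left,
    inner_add_right, real_inner_smul_right, real_inner_comm] at hu hv hw hsq ⊢
  -- `L * (⟪ζ, r⟫ - α (1 - αL/4) ‖r‖²)` is `L * hu + L * hv + (slack of hw) + hsq`, `r = u + v + w`.
  refine le_of_mul_le_mul_left ?_ hL
  linarith [mul_nonneg hL.le hu, mul_nonneg hL.le hv]

theorem tos_step_sq_dist_add_le {α lam L : ℝ} {z xB xA pg pf gB zs xs pgs pfs gs : E}
    (hα : 0 ≤ α) (hlam : 0 ≤ lam) (hL : 0 < L)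
    (hxB : xB = z - α • pg) (hxA : xA = (2 : ℝ) • xB - z - α • gB - α • pf)
    (hxs : xs = zs - α • pgs) (hres : pgs + pfs + gs = 0)
    (hg : 0 ≤ ⟪pg - pgs, xB - xs⟫) (hf : 0 ≤ ⟪pf - pfs, xA - xs⟫)
    (hh : ‖gB - gs‖ ^ 2 ≤ L * ⟪gB - gs, xB - xs⟫) :
    ‖z + lam • (xA - xB) - zs‖ ^ 2 + lam * α ^ 2 * (2 - lam - α * L / 2) * ‖pf + pg + gB‖ ^ 2
      ≤ ‖z - zs‖ ^ 2 := by
  have hr : (pg - pgs) + (pf - pfs) + (gB - gs) = pf + pg + gB := by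
    linear_combination (norm := module) -hres
  have hB : xB - xs = (z - zs) - α • (pg - pgs) := by
    linear_combination (norm := module) hxB - hxs
  have hA : xA - xs = (z - zs) - α • (pg - pgs) - α • (pf + pg + gB) := by
    linear_combination (norm := module) hxA + (2 : ℝ) • hxB - hxs
  have hz : z + lam • (xA - xB) - zs = (z - zs) - (lam * α) • (pf + pg + gB) := by
    linear_combination (norm := module) lam • hxA + lam • hxB
  have key := mul_sq_norm_add_le_inner hL (hB ▸ hg) (hr ▸ hA ▸ hf) (hB ▸ hh)
  rw [hr] at key
  rw [hz, norm_sub_sq_real, norm_smul, real_inner_smul_right, Real.norm_of_nonneg (by positivity)]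
  linarith [mul_le_mul_of_nonneg_left key (by positivity : 0 ≤ 2 * lam * α)]

theorem tos_fixedPoint_residual_eq_zero {α : ℝ} {zs xs pgs pfs gs : E} (hα : α ≠ 0)
    (hxs : xs = zs - α • pgs) (hxAs : xs = (2 : ℝ) • xs - zs - α • gs - α • pfs) :
    pgs + pfs + gs = 0 := by
  refine (smul_eq_zero_iff_right hα).mp ?_
  linear_combination (norm := module) hxAs + hxs

theorem exists_lt_le_div_of_add_mul_le {e r : ℕ → ℝ} {c : ℝ} (hc : 0 < c)
    (he : ∀ i, 0 ≤ e i) (hstep : ∀ i, e (i + 1) + c * r i ≤ e i) {k : ℕ} (hk : 0 < k) :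
    ∃ i < k, r i ≤ e 0 / (c * k) := by
  have hsum : c * ∑ i ∈ Finset.range k, r i ≤ e 0 := by
    have hdecr := Finset.sum_le_sum fun i (_ : i ∈ Finset.range k) ↦
      le_sub_iff_add_le'.mpr (hstep i)
    rw [Finset.mul_sum]
    linarith [he k, Finset.sum_range_sub' e k]
  obtain ⟨i, hi, hle⟩ := Finset.exists_le_of_sum_le (f := r) (g := fun _ ↦ e 0 / (c * k))
    (Finset.nonempty_range_iff.mpr hk.ne') (by
      rw [Finset.sum_const, Finset.card_range, nsmul_eq_mul]
      field_simp
      linarith)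
  exact ⟨i, Finset.mem_range.mp hi, hle⟩

end ThreeOperatorSplitting

theorem tos_best_sublinear_residual_bound_general
    {d : ℕ}
    (f g h : EuclideanSpace ℝ (Fin d) → ℝ)
    (hgrad : EuclideanSpace ℝ (Fin d) → EuclideanSpace ℝ (Fin d))
    (L_h : ℝ) (hLh : 0 < L_h)
    (hh : ConvexOn ℝ Set.univ h)
    (hdiff : ∀ x, HasGradientAt h (hgrad x) x)
    (hlip : ∀ x y, ‖hgrad x - hgrad y‖ ≤ L_h * ‖x - y‖)
    (α lam : ℝ) (hlam : lam = 1 / 2) (hα : α = 3 / (2 * L_h))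
    -- TOS trajectory
    (z xB y xA pg pf : ℕ → EuclideanSpace ℝ (Fin d))
    (hsubg : ∀ k w, g (xB k) + ⟪pg k, w - xB k⟫ ≤ g w)
    (hsubf : ∀ k w, f (xA k) + ⟪pf k, w - xA k⟫ ≤ f w)
    (hxB : ∀ k, xB k = z k - α • pg k)
    (hy : ∀ k, y k = (2 : ℝ) • xB k - z k - α • hgrad (xB k))
    (hxA : ∀ k, xA k = y k - α • pf k)
    (hz : ∀ k, z (k + 1) = z k + lam • (xA k - xB k))
    -- TOS fixed point
    (zs xs ys pgs pfs : EuclideanSpace ℝ (Fin d))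
    (hsubgs : ∀ w, g xs + ⟪pgs, w - xs⟫ ≤ g w)
    (hsubfs : ∀ w, f xs + ⟪pfs, w - xs⟫ ≤ f w)
    (hxs : xs = zs - α • pgs)
    (hys : ys = (2 : ℝ) • xs - zs - α • hgrad xs)
    (hxAs : xs = ys - α • pfs)
    (k : ℕ) (hk : 1 ≤ k) :
    ∃ i < k, ‖pf i + pg i + hgrad (xB i)‖ ^ 2 ≤
      32 * L_h ^ 2 * ‖z 0 - zs‖ ^ 2 / (27 * k) := by
  have hα0 : 0 < α := hα ▸ by positivity
  have hres := tos_fixedPoint_residual_eq_zero hα0.ne' hxs (hys ▸ hxAs)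
  have hrate : lam * α ^ 2 * (2 - lam - α * L_h / 2) = 27 / (32 * L_h ^ 2) := by
    subst hlam hα
    field_simp
    ring
  have hstep : ∀ i, ‖z (i + 1) - zs‖ ^ 2 + 27 / (32 * L_h ^ 2) * ‖pf i + pg i + hgrad (xB i)‖ ^ 2
      ≤ ‖z i - zs‖ ^ 2 := fun i ↦ by
    rw [hz i, ← hrate]
    exact tos_step_sq_dist_add_le hα0.le (by norm_num [hlam]) hLh (hxB i) (by rw [hxA i, hy i]) hxs
      hres (inner_sub_nonneg_of_subgradient (hsubg i) hsubgs)
      (inner_sub_nonneg_of_subgradient (hsubf i) hsubfs)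
      (hh.sq_norm_sub_le_mul_inner_of_lipschitz_gradient hdiff hlip hLh _ _)
  obtain ⟨i, hi, hle⟩ :=
    exists_lt_le_div_of_add_mul_le (e := fun i ↦ ‖z i - zs‖ ^ 2)
      (r := fun i ↦ ‖pf i + pg i + hgrad (xB i)‖ ^ 2) (by positivity) (fun _ ↦ sq_nonneg _) hstep hk
  refine ⟨i, hi, hle.trans_eq ?_⟩
  field_simp

/-- **Remark 1, first bound** (best sublinear residual bound). With `λ = 1/2` and
`α = 3/(2L_h)`, any TOS trajectory admitting a fixed point satisfies, for every `k ≥ 1`,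
`min_{0 ≤ i < k} ‖p_f^i + p_g^i + ∇h(x_B^i)‖² ≤ 32 L_h² ‖z⁰ − z*‖² / (27 k)`. -/
theorem tos_best_sublinear_residual_bound
    {d : ℕ} (hd : 1 ≤ d)
    (f g h : EuclideanSpace ℝ (Fin d) → ℝ)
    (hgrad : EuclideanSpace ℝ (Fin d) → EuclideanSpace ℝ (Fin d))
    (L_h : ℝ) (hLh : 0 < L_h)
    (hf : ConvexOn ℝ Set.univ f) (hg : ConvexOn ℝ Set.univ g)
    (hh : ConvexOn ℝ Set.univ h)
    (hdiff : ∀ x, HasGradientAt h (hgrad x) x)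
    (hlip : ∀ x y, ‖hgrad x - hgrad y‖ ≤ L_h * ‖x - y‖)
    (α lam : ℝ) (hlam : lam = 1 / 2) (hα : α = 3 / (2 * L_h))
    -- TOS trajectory
    (z xB y xA pg pf : ℕ → EuclideanSpace ℝ (Fin d))
    (hsubg : ∀ k w, g (xB k) + ⟪pg k, w - xB k⟫ ≤ g w)
    (hsubf : ∀ k w, f (xA k) + ⟪pf k, w - xA k⟫ ≤ f w)
    (hxB : ∀ k, xB k = z k - α • pg k)
    (hy : ∀ k, y k = (2 : ℝ) • xB k - z k - α • hgrad (xB k))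
    (hxA : ∀ k, xA k = y k - α • pf k)
    (hz : ∀ k, z (k + 1) = z k + lam • (xA k - xB k))
    -- TOS fixed point
    (zs xs ys pgs pfs : EuclideanSpace ℝ (Fin d))
    (hsubgs : ∀ w, g xs + ⟪pgs, w - xs⟫ ≤ g w)
    (hsubfs : ∀ w, f xs + ⟪pfs, w - xs⟫ ≤ f w)
    (hxs : xs = zs - α • pgs)
    (hys : ys = (2 : ℝ) • xs - zs - α • hgrad xs)
    (hxAs : xs = ys - α • pfs)
    (k : ℕ) (hk : 1 ≤ k) :
    ∃ i < k, ‖pf i + pg i + hgrad (xB i)‖ ^ 2 ≤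
      32 * L_h ^ 2 * ‖z 0 - zs‖ ^ 2 / (27 * k) :=
  tos_best_sublinear_residual_bound_general f g h hgrad L_h hLh hh hdiff hlip α lam hlam hα z xB y
    xA pg pf hsubg hsubf hxB hy hxA hz zs xs ys pgs pfs hsubgs hsubfs hxs hys hxAs k hk
end

section
/- Suboptimality bound for the composite objective along TOS points: Let E be a real inner product space, let f : E → ℝ be convex and differentiable with L_f-Lipschitz gradient (L_f > 0), let g : E → ℝ be convex, and let h : E → ℝ be convex and differentiable with L_h-Lipschitz gradient (L_h > 0). Set F = f + g + h. Then for all x_A, x_B, x* ∈ E and every subgradient p_g of g at x_B: F(x_B) − F(x*) ≤ ⟪∇f(x_A) + p_g + ∇h(x_B), x_B − x*⟫ + (L_f/2) ‖x_B − x_A‖² − (1/(2L_h)) ‖∇h(x_B) − ∇h(x*)‖². -/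
open scoped RealInnerProductSpace

/-!
Three first-order inequalities, one for each summand, evaluated at the test point `xs`, add up
to the bound: for `f` the descent lemma from `xA` to `xB` combined with the gradient inequality
from `xA` to `xs`; for `g` the subgradient inequality at `xB`; for `h` the gradient inequality
from `xB` to `xs`, sharpened by the co-coercivity term `‖∇h xB - ∇h xs‖² / (2 L_h)`. The latter
comes from applying the descent lemma to `h - ⟪∇h xB, ·⟫`, which is minimised at `xB`, along one
gradient step of length `1 / L_h`.
-/

section

variable {E : Type*} [NormedAddCommGroup E] [InnerProductSpace ℝ E] {f : E → ℝ} {grad : E → E}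

theorem hasDerivAt_comp_add_smul {g x v : E} {t : ℝ}
    (hf : HasFDerivAt f (InnerProductSpace.toDualMap ℝ E g) (x + t • v)) :
    HasDerivAt (fun s : ℝ => f (x + s • v)) ⟪g, v⟫ t := by
  have hline : HasDerivAt (fun s : ℝ => x + s • v) v t := by
    simpa using ((hasDerivAt_id t).smul_const v).const_add x
  have h := hf.comp_hasDerivAt t hline
  simp only [InnerProductSpace.toDualMap_apply_apply] at h
  exact h

theorem ConvexOn.add_inner_le {g x : E} (hconv : ConvexOn ℝ Set.univ f)
    (hf : HasFDerivAt f (InnerProductSpace.toDualMap ℝ E g) x) (y : E) :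
    f x + ⟪g, y - x⟫ ≤ f y := by
  have hline : ConvexOn ℝ Set.univ (fun s : ℝ => f (x + s • (y - x))) := by
    simpa [Function.comp_def, AffineMap.lineMap_apply_module', add_comm]
      using hconv.comp_affineMap (AffineMap.lineMap x y)
  have hd : HasDerivAt (fun s : ℝ => f (x + s • (y - x))) ⟪g, y - x⟫ 0 :=
    hasDerivAt_comp_add_smul (by rwa [zero_smul, add_zero])
  have := hline.le_slope_of_hasDerivAt (Set.mem_univ _) (Set.mem_univ _) one_pos hd
  simp only [slope_def_field, one_smul, add_sub_cancel, zero_smul, add_zero, sub_zero, div_one]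
    at this
  linarith

theorem hasFDerivAt_sub_inner {g x : E} (hf : HasFDerivAt f (InnerProductSpace.toDualMap ℝ E g) x)
    (c : E) :
    HasFDerivAt (fun w => f w - ⟪c, w⟫) (InnerProductSpace.toDualMap ℝ E (g - c)) x := by
  rw [map_sub]
  exact hf.sub (InnerProductSpace.toDualMap ℝ E c).hasFDerivAt

variable (hdiff : ∀ x, HasFDerivAt f (InnerProductSpace.toDualMap ℝ E (grad x)) x) {L : ℝ}
  (hlip : ∀ x y, ‖grad x - grad y‖ ≤ L * ‖x - y‖)
include hdiff hlip

theorem descent_lemma (x y : E) : f y ≤ f x + ⟪grad x, y - x⟫ + L / 2 * ‖y - x‖ ^ 2 := by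
  set v := y - x
  -- `φ` is antitone on `[0, ∞)`, and `φ 1 ≤ φ 0` is the claim.
  set φ : ℝ → ℝ := fun t => f (x + t • v) - t * ⟪grad x, v⟫ - L / 2 * t ^ 2 * ‖v‖ ^ 2
  have hφ : ∀ t, HasDerivAt φ (⟪grad (x + t • v), v⟫ - ⟪grad x, v⟫ - L * t * ‖v‖ ^ 2) t := by
    intro t
    refine (((hasDerivAt_comp_add_smul (hdiff (x + t • v))).sub
      ((hasDerivAt_id t).mul_const ⟪grad x, v⟫)).sub
      (((hasDerivAt_pow 2 t).const_mul (L / 2)).mul_const (‖v‖ ^ 2))).congr_deriv ?_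
    simp only [Nat.cast_ofNat]
    ring
  have hφ' : ∀ t, 0 ≤ t → ⟪grad (x + t • v), v⟫ - ⟪grad x, v⟫ - L * t * ‖v‖ ^ 2 ≤ 0 := by
    intro t ht
    have : ⟪grad (x + t • v) - grad x, v⟫ ≤ L * t * ‖v‖ ^ 2 :=
      calc ⟪grad (x + t • v) - grad x, v⟫ ≤ ‖grad (x + t • v) - grad x‖ * ‖v‖ :=
            real_inner_le_norm _ _
        _ ≤ L * ‖(x + t • v) - x‖ * ‖v‖ := by gcongr; exact hlip _ _
        _ = L * t * ‖v‖ ^ 2 := by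
            rw [add_sub_cancel_left, norm_smul, Real.norm_of_nonneg ht]; ring
    rw [inner_sub_left] at this
    linarith
  have hanti : AntitoneOn φ (Set.Ici 0) :=
    antitoneOn_of_hasDerivWithinAt_nonpos (convex_Ici 0)
      (fun t _ => (hφ t).continuousAt.continuousWithinAt)
      (fun t _ => (hφ t).hasDerivWithinAt)
      (fun t ht => hφ' t (interior_subset ht))
  have h10 : φ 1 ≤ φ 0 := hanti (Set.mem_Ici.2 le_rfl) (Set.mem_Ici.2 zero_le_one) zero_le_one
  simp only [φ, v, one_smul, add_sub_cancel, zero_smul, add_zero] at h10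
  linarith

theorem le_sub_norm_grad_sq_of_forall_le (hL : 0 < L) {x : E} (hmin : ∀ w, f x ≤ f w) (y : E) :
    f x ≤ f y - 1 / (2 * L) * ‖grad y‖ ^ 2 := by
  have hstep := descent_lemma hdiff hlip y (y - L⁻¹ • grad y)
  rw [sub_sub_cancel_left, inner_neg_right, real_inner_smul_right, real_inner_self_eq_norm_sq,
    norm_neg, norm_smul, Real.norm_of_nonneg (inv_nonneg.2 hL.le)] at hstep
  calc f x ≤ f (y - L⁻¹ • grad y) := hmin _
    _ ≤ f y + -(L⁻¹ * ‖grad y‖ ^ 2) + L / 2 * (L⁻¹ * ‖grad y‖) ^ 2 := hstep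
    _ = f y - 1 / (2 * L) * ‖grad y‖ ^ 2 := by field_simp; ring

theorem ConvexOn.add_inner_add_norm_grad_sub_sq_le (hconv : ConvexOn ℝ Set.univ f) (hL : 0 < L)
    (x y : E) : f x + ⟪grad x, y - x⟫ + 1 / (2 * L) * ‖grad y - grad x‖ ^ 2 ≤ f y := by
  have hmin : ∀ w, f x - ⟪grad x, x⟫ ≤ f w - ⟪grad x, w⟫ := fun w => by
    have := hconv.add_inner_le (hdiff x) w
    rw [inner_sub_right] at this
    linarith
  have := le_sub_norm_grad_sq_of_forall_le (f := fun w => f w - ⟪grad x, w⟫)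
    (grad := fun w => grad w - grad x) (fun w => hasFDerivAt_sub_inner (hdiff w) _)
    (fun a b => by simpa using hlip a b) hL hmin y
  rw [inner_sub_right]
  linarith

end

theorem composite_suboptimality_bound_general
    {E : Type*} [NormedAddCommGroup E] [InnerProductSpace ℝ E]
    (L_f L_h : ℝ) (hLh : 0 < L_h)
    (f g h : E → ℝ) (fgrad hgrad : E → E)
    (hf : ConvexOn ℝ Set.univ f)
    (hfdiff : ∀ x, HasFDerivAt f (InnerProductSpace.toDualMap ℝ E (fgrad x)) x)
    (hflip : ∀ x y, ‖fgrad x - fgrad y‖ ≤ L_f * ‖x - y‖)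
    (hh : ConvexOn ℝ Set.univ h)
    (hhdiff : ∀ x, HasFDerivAt h (InnerProductSpace.toDualMap ℝ E (hgrad x)) x)
    (hhlip : ∀ x y, ‖hgrad x - hgrad y‖ ≤ L_h * ‖x - y‖) :
    ∀ (xA xB xs pg : E), (∀ w, g xB + ⟪pg, w - xB⟫ ≤ g w) →
      (f xB + g xB + h xB) - (f xs + g xs + h xs) ≤
        ⟪fgrad xA + pg + hgrad xB, xB - xs⟫ + L_f / 2 * ‖xB - xA‖ ^ 2
          - 1 / (2 * L_h) * ‖hgrad xB - hgrad xs‖ ^ 2 := by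
  intro xA xB xs pg hpg
  have hf_upper := descent_lemma hfdiff hflip xA xB
  have hf_lower := hf.add_inner_le (hfdiff xA) xs
  have hg_lower := hpg xs
  have hh_lower := hh.add_inner_add_norm_grad_sub_sq_le hhdiff hhlip hLh xB xs
  rw [norm_sub_rev] at hh_lower
  simp only [inner_add_left, inner_sub_right] at *
  linarith

/-- **Suboptimality bound for the composite objective along TOS points.** With
`F = f + g + h`, where `f` is convex with `L_f`-Lipschitz gradient, `g` is convex, and
`h` is convex with `L_h`-Lipschitz gradient, for all `x_A, x_B, x*` and every subgradient
`p_g` of `g` at `x_B`: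
`F(x_B) − F(x*) ≤ ⟪∇f(x_A) + p_g + ∇h(x_B), x_B − x*⟫ + (L_f/2)‖x_B − x_A‖²
  − (1/(2L_h))‖∇h(x_B) − ∇h(x*)‖²`. -/
theorem composite_suboptimality_bound
    {E : Type*} [NormedAddCommGroup E] [InnerProductSpace ℝ E]
    (L_f L_h : ℝ) (hLf : 0 < L_f) (hLh : 0 < L_h)
    (f g h : E → ℝ) (fgrad hgrad : E → E)
    (hf : ConvexOn ℝ Set.univ f)
    (hfdiff : ∀ x, HasFDerivAt f (InnerProductSpace.toDualMap ℝ E (fgrad x)) x)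
    (hflip : ∀ x y, ‖fgrad x - fgrad y‖ ≤ L_f * ‖x - y‖)
    (hg : ConvexOn ℝ Set.univ g)
    (hh : ConvexOn ℝ Set.univ h)
    (hhdiff : ∀ x, HasFDerivAt h (InnerProductSpace.toDualMap ℝ E (hgrad x)) x)
    (hhlip : ∀ x y, ‖hgrad x - hgrad y‖ ≤ L_h * ‖x - y‖) :
    ∀ (xA xB xs pg : E), (∀ w, g xB + ⟪pg, w - xB⟫ ≤ g w) →
      (f xB + g xB + h xB) - (f xs + g xs + h xs) ≤
        ⟪fgrad xA + pg + hgrad xB, xB - xs⟫ + L_f / 2 * ‖xB - xA‖ ^ 2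
          - 1 / (2 * L_h) * ‖hgrad xB - hgrad xs‖ ^ 2 :=
  composite_suboptimality_bound_general L_f L_h hLh f g h fgrad hgrad hf hfdiff hflip hh hhdiff
    hhlip
end
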